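/- arXiv:2205.13372 — 2 statements merged into one kernel-verified Lean document; each statement's English description precedes it below -/
import Mathlib

section
/- Let L, L̃ : [0,∞) → (0,∞) be continuous with L ≤ L̃, L̃ strictly increasing, and p' > 1. Define M(δ)=∫_0^δ L^{1-p'}, M̃(δ)=∫_0^δ L̃^{1-p'}, and G(β)=L(M^{-1}(β)), G̃(β)=L̃(M̃^{-1}(β)) on their domains. Then for every β in the domain of G̃ contained in the domain of G, G(β) ≤ G̃(β). -/
open Set intervalIntegral

/-- Let `L, L̃ : [0,∞) → (0,∞)` be continuous with `L ≤ L̃` and `L̃` strictly increasing,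
and `p' > 1`.  Define `M δ = ∫₀^δ L^(1-p')`, `M̃ δ = ∫₀^δ L̃^(1-p')`, and the
reparametrized functions `G = L ∘ M⁻¹`, `G̃ = L̃ ∘ M̃⁻¹`.  Then `G β ≤ G̃ β` for every
`β` in the domain of `G̃` contained in the domain of `G`; i.e. whenever `β = M δ = M̃ δ̃`
with `δ, δ̃ ≥ 0`, one has `L δ ≤ L̃ δ̃`. -/
theorem reparametrized_comparison (p' : ℝ) (hp' : 1 < p') (L Ltil : ℝ → ℝ)
    (hLcont : ContinuousOn L (Set.Ici 0)) (hLtilcont : ContinuousOn Ltil (Set.Ici 0))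
    (hLpos : ∀ r ∈ Set.Ici (0:ℝ), 0 < L r) (hLtilpos : ∀ r ∈ Set.Ici (0:ℝ), 0 < Ltil r)
    (hle : ∀ r ∈ Set.Ici (0:ℝ), L r ≤ Ltil r)
    (hLtilmono : StrictMonoOn Ltil (Set.Ici 0)) :
    ∀ δ δtil : ℝ, 0 ≤ δ → 0 ≤ δtil →
      (∫ r in (0:ℝ)..δ, L r ^ (1 - p')) = (∫ r in (0:ℝ)..δtil, Ltil r ^ (1 - p')) →
      L δ ≤ Ltil δtil := by
  intro δ δtil hδ hδtil heq
  -- continuity of the integrands on [0,∞)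
  have hcL : ContinuousOn (fun r => L r ^ (1 - p')) (Set.Ici 0) :=
    hLcont.rpow_const (fun r hr => Or.inl (ne_of_gt (hLpos r hr)))
  have hcLt : ContinuousOn (fun r => Ltil r ^ (1 - p')) (Set.Ici 0) :=
    hLtilcont.rpow_const (fun r hr => Or.inl (ne_of_gt (hLtilpos r hr)))
  -- interval integrability on [a,b] ⊆ [0,∞)
  have hint : ∀ a b : ℝ, 0 ≤ a → 0 ≤ b →
      IntervalIntegrable (fun r => Ltil r ^ (1 - p')) MeasureTheory.volume a b := by
    intro a b ha hb
    apply (hcLt.mono ?_).intervalIntegrable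
    intro x hx
    exact le_trans (le_min ha hb) hx.1
  have hintL : IntervalIntegrable (fun r => L r ^ (1 - p')) MeasureTheory.volume 0 δ := by
    apply (hcL.mono ?_).intervalIntegrable
    rw [Set.uIcc_of_le hδ]
    exact fun x hx => hx.1
  -- M̃ δ ≤ M δ
  have hMM : (∫ r in (0:ℝ)..δ, Ltil r ^ (1 - p')) ≤ ∫ r in (0:ℝ)..δ, L r ^ (1 - p') := by
    apply intervalIntegral.integral_mono_on hδ (hint 0 δ le_rfl hδ) hintL
    intro x hx
    exact Real.rpow_le_rpow_of_nonpos (hLpos x hx.1) (hle x hx.1) (by linarith)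
  -- δ ≤ δtil
  have hdd : δ ≤ δtil := by
    by_contra h
    push_neg at h
    have hsplit : (∫ r in (0:ℝ)..δ, Ltil r ^ (1 - p')) =
        (∫ r in (0:ℝ)..δtil, Ltil r ^ (1 - p')) + ∫ r in δtil..δ, Ltil r ^ (1 - p') :=
      (intervalIntegral.integral_add_adjacent_intervals (hint 0 δtil le_rfl hδtil)
        (hint δtil δ hδtil hδ)).symm
    have hpos : 0 < ∫ r in δtil..δ, Ltil r ^ (1 - p') := by
      apply intervalIntegral.intervalIntegral_pos_of_pos_on (hint δtil δ hδtil hδ)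
      · intro x hx
        exact Real.rpow_pos_of_pos (hLtilpos x (le_trans hδtil hx.1.le)) _
      · exact h
    have := heq ▸ hMM
    linarith
  calc L δ ≤ Ltil δ := hle δ hδ
    _ ≤ Ltil δtil := hLtilmono.monotoneOn hδ hδtil hdd
end

section
/- Under the interior-parallels comparison (G ≤ G̃, equal 'total mass' ∫_0^{β*} G^{p'} = ∫_0^{β̃*} G̃^{p'}, β̃* ≤ β*, f C^1 nondecreasing with f(0)=0 realizing the first eigenfunction of the annulus), the Rayleigh quotients satisfy (∫_0^{β̃*} |f'|^p dβ) / (∫_0^{β̃*} f^p G^{p'} dβ + f(β̃*)^p ∫_{β̃*}^{β*} G^{p'} dβ) ≤ (∫_0^{β̃*} |f'|^p dβ) / (∫_0^{β̃*} f^p G̃^{p'} dβ). -/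
open Set intervalIntegral

/-- **Rayleigh-quotient comparison in the method of interior parallels.**
Under the interior-parallels comparison — `G ≤ G̃` positive continuous, equal total mass
`∫₀^{β*} G^{p'} = ∫₀^{β̃*} G̃^{p'}` with `β̃* ≤ β*`, and `f` a `C¹` nondecreasing function
with `f 0 = 0` (realizing the first eigenfunction of the annulus, so that its weighted
`L^p` norm is positive) — the Rayleigh quotients satisfy
`(∫₀^{β̃*}|f'|^p) / (∫₀^{β̃*} f^p G^{p'} + f(β̃*)^p ∫_{β̃*}^{β*} G^{p'})
  ≤ (∫₀^{β̃*}|f'|^p) / (∫₀^{β̃*} f^p G̃^{p'})`. -/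
theorem rayleigh_quotient_comparison (p p' βt βs : ℝ)
    (hp : 1 < p) (hp' : p' = p / (p - 1))
    (hβt : 0 ≤ βt) (hββ : βt ≤ βs)
    (f f' G Gtil : ℝ → ℝ)
    (hf : ∀ β ∈ Set.Icc 0 βt, HasDerivAt f (f' β) β)
    (hf'cont : ContinuousOn f' (Set.Icc 0 βt))
    (hfmono : MonotoneOn f (Set.Icc 0 βt)) (hf0 : f 0 = 0)
    (hGcont : ContinuousOn G (Set.Icc 0 βs)) (hGtilcont : ContinuousOn Gtil (Set.Icc 0 βt))
    (hGpos : ∀ β ∈ Set.Icc 0 βs, 0 < G β) (hGtilpos : ∀ β ∈ Set.Icc 0 βt, 0 < Gtil β)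
    (hle : ∀ β ∈ Set.Icc 0 βt, G β ≤ Gtil β)
    (hmass : (∫ β in (0:ℝ)..βs, G β ^ p') = ∫ β in (0:ℝ)..βt, Gtil β ^ p')
    (hpos : 0 < ∫ β in (0:ℝ)..βt, f β ^ p * Gtil β ^ p') :
    (∫ β in (0:ℝ)..βt, |f' β| ^ p) /
        ((∫ β in (0:ℝ)..βt, f β ^ p * G β ^ p') + f βt ^ p * ∫ β in βt..βs, G β ^ p') ≤
      (∫ β in (0:ℝ)..βt, |f' β| ^ p) / (∫ β in (0:ℝ)..βt, f β ^ p * Gtil β ^ p') := by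
  have hp0 : (0:ℝ) ≤ p := le_of_lt (lt_trans one_pos hp)
  -- subsets
  have hsub : Set.Icc (0:ℝ) βt ⊆ Set.Icc 0 βs := Set.Icc_subset_Icc le_rfl hββ
  have huIcc : Set.uIcc (0:ℝ) βt = Set.Icc 0 βt := Set.uIcc_of_le hβt
  have huIcc2 : Set.uIcc βt βs = Set.Icc βt βs := Set.uIcc_of_le hββ
  -- continuity of f
  have hfcont : ContinuousOn f (Set.Icc 0 βt) := fun x hx =>
    (hf x hx).continuousAt.continuousWithinAt
  -- f nonneg and bounded by f βt on Icc
  have hβtmem : βt ∈ Set.Icc (0:ℝ) βt := ⟨hβt, le_rfl⟩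
  have hfnn : ∀ β ∈ Set.Icc (0:ℝ) βt, 0 ≤ f β := fun β hβ => by
    have := hfmono ⟨le_rfl, hβt⟩ hβ hβ.1
    simpa [hf0] using this
  have hfle : ∀ β ∈ Set.Icc (0:ℝ) βt, f β ≤ f βt := fun β hβ =>
    hfmono hβ hβtmem hβ.2
  -- continuity of G^p', Gtil^p'
  have hGp : ContinuousOn (fun β => G β ^ p') (Set.Icc 0 βs) :=
    hGcont.rpow_const (fun x hx => Or.inl (hGpos x hx).ne')
  have hGtilp : ContinuousOn (fun β => Gtil β ^ p') (Set.Icc 0 βt) :=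
    hGtilcont.rpow_const (fun x hx => Or.inl (hGtilpos x hx).ne')
  have hfp : ContinuousOn (fun β => f β ^ p) (Set.Icc 0 βt) :=
    hfcont.rpow_const (fun x hx => Or.inr hp0)
  -- integrabilities
  have hI1 : IntervalIntegrable (fun β => f β ^ p * G β ^ p') MeasureTheory.volume 0 βt :=
    (hfp.mul (hGp.mono hsub)).intervalIntegrable_of_Icc hβt
  have hI2 : IntervalIntegrable (fun β => f β ^ p * Gtil β ^ p') MeasureTheory.volume 0 βt :=
    (hfp.mul hGtilp).intervalIntegrable_of_Icc hβt
  have hIG1 : IntervalIntegrable (fun β => G β ^ p') MeasureTheory.volume 0 βt :=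
    ((hGp.mono hsub)).intervalIntegrable_of_Icc hβt
  have hIG2 : IntervalIntegrable (fun β => G β ^ p') MeasureTheory.volume βt βs :=
    ((hGp.mono (Set.Icc_subset_Icc hβt le_rfl))).intervalIntegrable_of_Icc hββ
  have hIGtil : IntervalIntegrable (fun β => Gtil β ^ p') MeasureTheory.volume 0 βt :=
    hGtilp.intervalIntegrable_of_Icc hβt
  -- mass split
  have hsplit : (∫ β in (0:ℝ)..βt, G β ^ p') + (∫ β in βt..βs, G β ^ p')
      = ∫ β in (0:ℝ)..βs, G β ^ p' :=
    intervalIntegral.integral_add_adjacent_intervals hIG1 hIG2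
  have htail : (∫ β in βt..βs, G β ^ p')
      = (∫ β in (0:ℝ)..βt, Gtil β ^ p') - ∫ β in (0:ℝ)..βt, G β ^ p' := by
    rw [← hmass, ← hsplit]; ring
  -- key denominator comparison
  have hnum : 0 ≤ ∫ β in (0:ℝ)..βt, |f' β| ^ p := by
    apply intervalIntegral.integral_nonneg hβt
    intro x hx
    exact Real.rpow_nonneg (abs_nonneg _) p
  have hden : (∫ β in (0:ℝ)..βt, f β ^ p * Gtil β ^ p')
      ≤ (∫ β in (0:ℝ)..βt, f β ^ p * G β ^ p') + f βt ^ p * ∫ β in βt..βs, G β ^ p' := by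
    rw [htail, mul_sub]
    have hfbt : IntervalIntegrable (fun β => f βt ^ p * G β ^ p') MeasureTheory.volume 0 βt :=
      hIG1.const_mul _
    have hfbttil : IntervalIntegrable (fun β => f βt ^ p * Gtil β ^ p')
        MeasureTheory.volume 0 βt := hIGtil.const_mul _
    rw [← intervalIntegral.integral_const_mul, ← intervalIntegral.integral_const_mul]
    have h1 : (∫ β in (0:ℝ)..βt, f β ^ p * Gtil β ^ p')
        + (∫ β in (0:ℝ)..βt, f βt ^ p * G β ^ p')
        ≤ (∫ β in (0:ℝ)..βt, f β ^ p * G β ^ p')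
        + (∫ β in (0:ℝ)..βt, f βt ^ p * Gtil β ^ p') := by
      rw [← intervalIntegral.integral_add hI2 hfbt, ← intervalIntegral.integral_add hI1 hfbttil]
      apply intervalIntegral.integral_mono_on hβt (hI2.add hfbt) (hI1.add hfbttil)
      intro x hx
      have hGx := hGpos x (hsub hx)
      have hGlex := hle x hx
      have hfx := hfnn x hx
      have hflex := hfle x hx
      have hGp' : G x ^ p' ≤ Gtil x ^ p' :=
        Real.rpow_le_rpow hGx.le hGlex (by
          rw [hp']
          exact div_nonneg (by linarith) (by linarith))
      have hfp' : f x ^ p ≤ f βt ^ p := Real.rpow_le_rpow hfx hflex hp0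
      nlinarith [Real.rpow_nonneg hfx p, Real.rpow_nonneg hGx.le p',
        Real.rpow_nonneg (le_trans hfx hflex) p, sub_nonneg.mpr hGp', sub_nonneg.mpr hfp',
        mul_nonneg (sub_nonneg.mpr hfp') (sub_nonneg.mpr hGp')]
    linarith
  exact div_le_div_of_nonneg_left hnum hpos hden
end
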